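/- arXiv:1909.07703 — 3 statements merged into one kernel-verified Lean document; each statement's English description precedes it below -/
import Mathlib

section
/- There exists an environment traversable with two robots but not with one: V = {b, u, v, w}, E_M = {[b,u],[u,v],[v,w]}, E_C = {[b,u],[u,v],[v,w],[b,w]} with sensing location w. With one robot, every connected schedule starting at b can never occupy v (a robot at v not adjacent in G_C to b alone is disconnected unless another robot helps), so w is unreachable; with two robots the schedule (b,b),(u,u),(u,v),(u,w) traverses to w maintaining connectivity. -/
/-!
A robot is in contact with the base `b` only at `b` itself or at a `G_C`-neighbour of `b`,
namely `u` or `w`. In `G_M` the vertex `w` is reached only through `v`, which is not such a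
place, so a lone robot never leaves `{b, u}`. Two robots get through by keeping one robot at
`u` as a relay, adjacent to both `b` and `v`, while the other walks on `b, u, v, w`.
-/

def StepOK {V : Type} (GM : SimpleGraph V) {r : ℕ} (p q : Fin r → V) : Prop :=
  ∀ i, p i = q i ∨ GM.Adj (p i) (q i)

def ConnAt {V : Type} (GC : SimpleGraph V) (b : V) {r : ℕ} (p : Fin r → V) : Prop :=
  ((GC.induce (Set.range p ∪ {b})).Connected)

/-- Movement graph on `V = {b, u, v, w}` (encoded as `0, 1, 2, 3`):
the path `b–u–v–w`. -/
noncomputable def exGM2 : SimpleGraph (Fin 4) :=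
  SimpleGraph.fromRel (fun a c => (a = 0 ∧ c = 1) ∨ (a = 1 ∧ c = 2) ∨ (a = 2 ∧ c = 3))

/-- Connectivity graph: edges `b–u`, `u–v`, `v–w`, `b–w`. -/
noncomputable def exGC2 : SimpleGraph (Fin 4) :=
  SimpleGraph.fromRel (fun a c =>
    (a = 0 ∧ c = 1) ∨ (a = 1 ∧ c = 2) ∨ (a = 2 ∧ c = 3) ∨ (a = 0 ∧ c = 3))

namespace SimpleGraph

variable {V : Type*} {G : SimpleGraph V}

lemma connected_induce_of_forall_eq_or_adj {s : Set V} {c : V} (hc : c ∈ s)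
    (h : ∀ x ∈ s, x = c ∨ G.Adj x c) : (G.induce s).Connected := by
  rw [connected_iff_exists_forall_reachable]
  refine ⟨⟨c, hc⟩, fun ⟨x, hx⟩ => ?_⟩
  rcases h x hx with rfl | hadj
  · rfl
  · exact (Adj.reachable (G := G.induce s) (u := ⟨x, hx⟩) (v := ⟨c, hc⟩) hadj).symm

lemma eq_or_adj_of_connected_induce_pair {x y : V} (h : (G.induce {x, y}).Connected) :
    x = y ∨ G.Adj x y := by
  obtain ⟨walk⟩ := h.preconnected ⟨x, by simp⟩ ⟨y, by simp⟩
  cases walk with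
  | nil => exact .inl rfl
  | @cons _ z _ hadj _ =>
    obtain ⟨z, rfl | rfl⟩ := z
    · exact absurd rfl hadj.ne
    · exact .inr hadj

end SimpleGraph

section Schedules

variable {V : Type} {GM GC : SimpleGraph V} {b : V}

lemma ConnAt.eq_or_adj_of_fin_one {p : Fin 1 → V} (h : ConnAt GC b p) :
    p 0 = b ∨ GC.Adj (p 0) b := by
  rw [ConnAt, Set.range_unique, Set.singleton_union] at h
  exact SimpleGraph.eq_or_adj_of_connected_induce_pair h

lemma connAt_of_forall_eq_or_adj {r : ℕ} {p : Fin r → V} (c : V)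
    (hc : c ∈ Set.range p ∪ {b}) (hb : b = c ∨ GC.Adj b c)
    (hp : ∀ i, p i = c ∨ GC.Adj (p i) c) : ConnAt GC b p :=
  SimpleGraph.connected_induce_of_forall_eq_or_adj hc <| by
    rintro x (⟨i, rfl⟩ | rfl)
    exacts [hp i, hb]

lemma single_robot_mem_of_closed (S : Set V) (hbS : b ∈ S)
    (hS : ∀ x ∈ S, ∀ y, GM.Adj x y → (y = b ∨ GC.Adj y b) → y ∈ S)
    (p : ℕ → Fin 1 → V) (h0 : p 0 = fun _ => b) (hstep : ∀ t, StepOK GM (p t) (p (t + 1)))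
    (hconn : ∀ t, ConnAt GC b (p t)) (t : ℕ) : p t 0 ∈ S := by
  induction t with
  | zero => simpa [h0] using hbS
  | succ t ih =>
    rcases hstep t 0 with heq | hadj
    · exact heq ▸ ih
    · exact hS _ ih _ hadj (hconn (t + 1)).eq_or_adj_of_fin_one

end Schedules

lemma exGM2_adj_mem_zero_one_of_contact (x : Fin 4) (hx : x ∈ ({0, 1} : Set (Fin 4)))
    (y : Fin 4) (hxy : exGM2.Adj x y) (hy : y = 0 ∨ exGC2.Adj y 0) :
    y ∈ ({0, 1} : Set (Fin 4)) := by
  fin_cases x <;> fin_cases y <;> simp_all [exGM2, exGC2, SimpleGraph.fromRel_adj]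

/-- the environment `V = {b, u, v, w}`, `E_M = {bu, uv, vw}`,
`E_C = {bu, uv, vw, bw}` with sensing location `w` can be traversed with two
robots but not with one: no connected single-robot schedule starting at `b`
ever reaches `w`, while two robots admit a connected schedule
`(b,b), (u,u), (u,v), (u,w)` in which a robot reaches `w`. -/
theorem stmt8 :
    (∀ p : ℕ → Fin 1 → Fin 4,
      (p 0 = fun _ => 0) →
      (∀ t, StepOK exGM2 (p t) (p (t + 1))) →
      (∀ t, ConnAt exGC2 0 (p t)) →
      ∀ t i, p t i ≠ 3) ∧
    (∃ (T : ℕ) (p : ℕ → Fin 2 → Fin 4),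
      (p 0 = fun _ => 0) ∧
      (∀ t < T, StepOK exGM2 (p t) (p (t + 1))) ∧
      (∀ t ≤ T, ConnAt exGC2 0 (p t)) ∧
      (∃ t ≤ T, ∃ i, p t i = 3)) := by
  constructor
  · intro p h0 hstep hconn t i
    have hmem := single_robot_mem_of_closed _ (by simp) exGM2_adj_mem_zero_one_of_contact
      p h0 hstep hconn t
    rw [Subsingleton.elim i 0]
    intro h
    simp [h] at hmem
  · refine ⟨3, fun t => ![⟨min t 1, by omega⟩, ⟨min t 3, by omega⟩],
      by ext i; fin_cases i <;> rfl, ?_, ?_, ⟨3, le_rfl, 1, rfl⟩⟩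
    · intro t ht i
      interval_cases t <;> fin_cases i <;> simp [exGM2, SimpleGraph.fromRel_adj]
    · intro t ht
      -- a star around `u` while the walker is at `v`, around `b` otherwise
      refine connAt_of_forall_eq_or_adj (if t = 2 then 1 else 0) ?_ ?_ ?_ <;>
        interval_cases t <;> simp [Fin.forall_fin_two, exGC2, SimpleGraph.fromRel_adj]
end

section
/- If a multiset {s_1,…,s_α} of positive integers admits a partition into two subsets each summing to r = (1/2)Σ s_i, then the corresponding d-CMPSTT star instance (base b with β children v_1,…,v_α, A(v_i) = s_i robots required per partition, A(b) = 0, zero relays, unit travel time Δ = 1 between b and each v_i, and unit coverage time Γ(v_i,·) = 1) admits a visiting schedule with worst idleness WI = 6: visit one half of the partitions concurrently, retreat to b, visit the other half, retreat, and repeat. -/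
/-! Phase `t` covers its partitions at time `3t + 2`, so two consecutive phases cover within a
window of six steps; alternating between the two halves of the partition puts every child in one
of any two consecutive phases, and each half uses exactly the `r` robots. -/

/-- A cyclic schedule for the star d-CMPSTT instance (base `b` with children
`v_1, …, v_α`, unit travel time `Δ ≡ 1`, unit coverage time `Γ ≡ 1`, no
relays): in phase `t` (taking 3 time steps: travel, cover, return) the
partitions in `assign t` are visited concurrently; partition `i` is covered at
time `3t + 2` of phase `t`. -/
def coversAt {α : ℕ} (assign : ℕ → Finset (Fin α)) (i : Fin α) (τ : ℕ) : Prop :=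
  ∃ t, τ = 3 * t + 2 ∧ i ∈ assign t

/-- Feasibility: in each phase the robots assigned (each partition `i` needs
`A(v_i) = s i` robots) do not exceed the `r` available robots. -/
def Feasible {α : ℕ} (s : Fin α → ℕ) (r : ℕ) (assign : ℕ → Finset (Fin α)) : Prop :=
  ∀ t, ∑ i ∈ assign t, s i ≤ r

/-- Worst idleness at most `W`: every time window of length `W` contains a
coverage of every partition. -/
def IdleLE {α : ℕ} (assign : ℕ → Finset (Fin α)) (W : ℕ) : Prop :=
  ∀ (i : Fin α) (τ : ℕ), ∃ τ', τ ≤ τ' ∧ τ' < τ + W ∧ coversAt assign i τ'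

def alternate {α : ℕ} (S : Finset (Fin α)) (t : ℕ) : Finset (Fin α) :=
  if t % 2 = 0 then S else Sᶜ

theorem feasible_alternate {α r : ℕ} {s : Fin α → ℕ} {S : Finset (Fin α)}
    (hS : ∑ i ∈ S, s i ≤ r) (hSc : ∑ i ∈ Sᶜ, s i ≤ r) : Feasible s r (alternate S) := by
  intro t
  unfold alternate
  split_ifs
  exacts [hS, hSc]

theorem mem_alternate_or_mem_alternate_succ {α : ℕ} (S : Finset (Fin α)) (i : Fin α) (t : ℕ) :
    i ∈ alternate S t ∨ i ∈ alternate S (t + 1) := by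
  unfold alternate
  by_cases hi : i ∈ S <;> rcases Nat.mod_two_eq_zero_or_one t with ht | ht <;>
    simp [hi, ht, Nat.succ_mod_two_eq_zero_iff]

theorem coversAt_of_mem {α : ℕ} {assign : ℕ → Finset (Fin α)} {i : Fin α} {t : ℕ}
    (h : i ∈ assign t) : coversAt assign i (3 * t + 2) :=
  ⟨t, rfl, h⟩

theorem idleLE_six_of_mem_or_mem_succ {α : ℕ} {assign : ℕ → Finset (Fin α)}
    (h : ∀ i t, i ∈ assign t ∨ i ∈ assign (t + 1)) : IdleLE assign 6 := by
  intro i τ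
  rcases h i (τ / 3) with hi | hi <;> exact ⟨_, by omega, by omega, coversAt_of_mem hi⟩

theorem stmt11_general (α r : ℕ) (s : Fin α → ℕ)
    (hpart : ∃ S₁ : Finset (Fin α), ∑ i ∈ S₁, s i = r ∧ ∑ i ∈ S₁ᶜ, s i = r) :
    ∃ assign : ℕ → Finset (Fin α),
      Feasible s r assign ∧
      (∃ S₁ : Finset (Fin α), (∑ i ∈ S₁, s i = r) ∧ (∑ i ∈ S₁ᶜ, s i = r) ∧
        ∀ t, assign t = if t % 2 = 0 then S₁ else S₁ᶜ) ∧
      IdleLE assign 6 := by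
  obtain ⟨S₁, h₁, h₂⟩ := hpart
  exact ⟨alternate S₁, feasible_alternate h₁.le h₂.le, ⟨S₁, h₁, h₂, fun _ => rfl⟩,
    idleLE_six_of_mem_or_mem_succ (mem_alternate_or_mem_alternate_succ S₁)⟩

/-- if the multiset `{s_1, …, s_α}` of positive integers admits a
partition into two subsets, each summing to `r = (1/2) Σ s_i`, then the star
d-CMPSTT instance (`A(v_i) = s i`, unit travel and coverage times, no relays)
admits a feasible schedule with worst idleness `6`: visit one half of the
partitions concurrently, retreat, visit the other half, retreat, and repeat. -/
theorem stmt11 (α r : ℕ) (s : Fin α → ℕ) (hpos : ∀ i, 0 < s i)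
    (hsum : ∑ i, s i = 2 * r)
    (hpart : ∃ S₁ : Finset (Fin α), ∑ i ∈ S₁, s i = r ∧ ∑ i ∈ S₁ᶜ, s i = r) :
    ∃ assign : ℕ → Finset (Fin α),
      Feasible s r assign ∧
      (∃ S₁ : Finset (Fin α), (∑ i ∈ S₁, s i = r) ∧ (∑ i ∈ S₁ᶜ, s i = r) ∧
        ∀ t, assign t = if t % 2 = 0 then S₁ else S₁ᶜ) ∧
      IdleLE assign 6 :=
  stmt11_general α r s hpart
end

section
/- Conversely, in the star d-CMPSTT instance built from a number partition instance (A(v_i) = s_i, r = (1/2)Σ s_i, each partition visited at most twice per cycle), any schedule achieving worst idleness WI ≤ 6 yields an exact partition of {s_1,…,s_α} into two subsets of equal sum r; in particular no partition is visited twice per cycle and no branch receives surplus robots. Hence d-CMPSTT is NP-hard. -/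
/-! Every window `[3t, 3t + 6)` contains only the coverage instants `3t + 2` and `3t + 5`, so
idleness `6` forces the partitions visited in phases `t` and `t + 1` to cover all of them.
Each phase carries at most `r` robots while all partitions together need `2r`, so phase `0`
carries exactly `r` and is one half of an exact partition. -/

open Finset

theorem IdleLE.union_eq_univ_of_le_six {α : ℕ} {assign : ℕ → Finset (Fin α)} {W : ℕ}
    (hidle : IdleLE assign W) (hW : W ≤ 6) (t : ℕ) : assign t ∪ assign (t + 1) = univ := by
  refine eq_univ_of_forall fun i => ?_
  obtain ⟨_, hlo, hhi, t', rfl, hmem⟩ := hidle i (3 * t)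
  obtain rfl | rfl : t' = t ∨ t' = t + 1 := by omega
  exacts [mem_union_left _ hmem, mem_union_right _ hmem]

theorem Finset.sum_eq_of_union_eq_univ_of_sum_le {ι : Type*} [Fintype ι] [DecidableEq ι]
    {f : ι → ℕ} {A B : Finset ι} {r : ℕ} (hAB : A ∪ B = univ)
    (hA : ∑ i ∈ A, f i ≤ r) (hB : ∑ i ∈ B, f i ≤ r) (hsum : ∑ i, f i = 2 * r) :
    ∑ i ∈ A, f i = r ∧ ∑ i ∈ Aᶜ, f i = r := by
  have hunion := sum_union_inter (s₁ := A) (s₂ := B) (f := f)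
  have hcompl := sum_add_sum_compl A f
  rw [hAB] at hunion
  omega

theorem stmt12_general (α r : ℕ) (s : Fin α → ℕ)
    (hsum : ∑ i, s i = 2 * r)
    (hsched : ∃ assign : ℕ → Finset (Fin α), Feasible s r assign ∧ IdleLE assign 6) :
    ∃ S₁ : Finset (Fin α), ∑ i ∈ S₁, s i = r ∧ ∑ i ∈ S₁ᶜ, s i = r := by
  obtain ⟨assign, hfeas, hidle⟩ := hsched
  exact ⟨assign 0, sum_eq_of_union_eq_univ_of_sum_le
    (hidle.union_eq_univ_of_le_six le_rfl 0) (hfeas 0) (hfeas 1) hsum⟩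

/-- conversely, in the star d-CMPSTT instance built from a number
partition instance (`A(v_i) = s i > 0`, `r = (1/2) Σ s_i`), any feasible
schedule achieving worst idleness at most `6` yields an exact partition of
`{s_1, …, s_α}` into two subsets of equal sum `r`. Hence d-CMPSTT is NP-hard. -/
theorem stmt12 (α r : ℕ) (s : Fin α → ℕ) (hpos : ∀ i, 0 < s i)
    (hsum : ∑ i, s i = 2 * r)
    (hsched : ∃ assign : ℕ → Finset (Fin α), Feasible s r assign ∧ IdleLE assign 6) :
    ∃ S₁ : Finset (Fin α), ∑ i ∈ S₁, s i = r ∧ ∑ i ∈ S₁ᶜ, s i = r :=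
  stmt12_general α r s hsum hsched
end
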